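/- arXiv:2403.09071 — 5 statements merged into one kernel-verified Lean document; each statement's English description precedes it below -/
import Mathlib

section
/- There exists a constant C > 0 such that for every x = (x', x₃) ∈ ℝ³ with x₃ ∈ [−π, π], the series S(x) := Σ_{m=1}^∞ [ (|x'|² + (x₃ − 2mπ)²)^{−1/2} − 1/(2mπ) ] + Σ_{m=1}^∞ [ (|x'|² + (x₃ + 2mπ)²)^{−1/2} − 1/(2mπ) ] converges absolutely and satisfies |S(x)| ≤ C |x|, where |x| = (|x'|² + x₃²)^{1/2}. -/
open MeasureTheory Real intervalIntegral

/-- Euclidean norm on `ℝ²`. -/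
noncomputable def vnorm (x : ℝ × ℝ) : ℝ := Real.sqrt (x.1 ^ 2 + x.2 ^ 2)

/-- Rotation `R_a` on `ℝ²`. -/
noncomputable def vrot (a : ℝ) (x : ℝ × ℝ) : ℝ × ℝ :=
  (x.1 * Real.cos a + x.2 * Real.sin a, -x.1 * Real.sin a + x.2 * Real.cos a)

/-- Japanese bracket `⟨x⟩ = √(1+|x|²)` on `ℝ²`. -/
noncomputable def jap (x : ℝ × ℝ) : ℝ := Real.sqrt (1 + x.1 ^ 2 + x.2 ^ 2)

/-!
Write `b = 2(m+1)π` and `ρ = √(r² + t²)`. The points `(r, t + b)` and `(0, b)` of the plane are at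
distance `ρ`, so `|√(r² + (t+b)²) - b| ≤ ρ`, and for `|t| ≤ π ≤ b/2` the `m`-th term is at most
`2ρ/b² = ρ/(2π²(m+1)²)`. Summing with `∑ 1/(m+1)² = π²/6` bounds each of the two series by `ρ/12`;
the series in `x₃ - 2mπ` is the one in `t + 2mπ` at `t = -x₃`.
-/

theorem hasSum_one_div_succ_sq :
    HasSum (fun m : ℕ => 1 / ((m : ℝ) + 1) ^ 2) (π ^ 2 / 6) := by
  simpa using (hasSum_nat_add_iff' 1).mpr hasSum_zeta_two

theorem abs_sqrt_sq_add_sq_add_sub_le (r t : ℝ) {b : ℝ} (hb : 0 ≤ b) :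
    |√(r ^ 2 + (t + b) ^ 2) - b| ≤ √(r ^ 2 + t ^ 2) := by
  have ht : |t| ≤ √(r ^ 2 + t ^ 2) := Real.abs_le_sqrt (by nlinarith)
  have htb : |t + b| ≤ √(r ^ 2 + (t + b) ^ 2) := Real.abs_le_sqrt (by nlinarith)
  have hle : √(r ^ 2 + (t + b) ^ 2) ≤ b + √(r ^ 2 + t ^ 2) := by
    rw [Real.sqrt_le_left (by positivity)]
    nlinarith [Real.sq_sqrt (by positivity : 0 ≤ r ^ 2 + t ^ 2), le_abs_self t]
  have hge : b ≤ √(r ^ 2 + (t + b) ^ 2) + √(r ^ 2 + t ^ 2) := by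
    linarith [le_abs_self (t + b), neg_abs_le t]
  rw [abs_sub_le_iff]
  constructor <;> linarith

theorem abs_one_div_sqrt_sub_one_div_le (r t : ℝ) {b : ℝ} (hb : 0 < b) (ht : |t| ≤ b / 2) :
    |1 / √(r ^ 2 + (t + b) ^ 2) - 1 / b| ≤ 2 * √(r ^ 2 + t ^ 2) / b ^ 2 := by
  set S := √(r ^ 2 + (t + b) ^ 2)
  have hS : b / 2 ≤ S := by
    have : |t + b| ≤ S := Real.abs_le_sqrt (by nlinarith)
    linarith [neg_abs_le t, le_abs_self (t + b)]
  have hS0 : 0 < S := by linarith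
  calc |1 / S - 1 / b| = |S - b| / (S * b) := by
        rw [show 1 / S - 1 / b = (b - S) / (S * b) by field_simp, abs_div, abs_sub_comm,
          abs_of_pos (mul_pos hS0 hb)]
    _ ≤ √(r ^ 2 + t ^ 2) / (b / 2 * b) := by
        gcongr
        exact abs_sqrt_sq_add_sq_add_sub_le r t hb.le
    _ = 2 * √(r ^ 2 + t ^ 2) / b ^ 2 := by field_simp

theorem summable_abs_and_abs_tsum_le (r t : ℝ) (ht : |t| ≤ π) :
    Summable (fun m : ℕ =>
      |1 / √(r ^ 2 + (t + 2 * ((m : ℝ) + 1) * π) ^ 2) - 1 / (2 * ((m : ℝ) + 1) * π)|) ∧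
    |∑' m : ℕ, (1 / √(r ^ 2 + (t + 2 * ((m : ℝ) + 1) * π) ^ 2) - 1 / (2 * ((m : ℝ) + 1) * π))|
      ≤ √(r ^ 2 + t ^ 2) / 12 := by
  set ρ := √(r ^ 2 + t ^ 2)
  have hbound : ∀ m : ℕ,
      |1 / √(r ^ 2 + (t + 2 * ((m : ℝ) + 1) * π) ^ 2) - 1 / (2 * ((m : ℝ) + 1) * π)|
        ≤ ρ / (2 * π ^ 2) * (1 / ((m : ℝ) + 1) ^ 2) := by
    intro m
    have hm : (1 : ℝ) ≤ m + 1 := by linarith [m.cast_nonneg (α := ℝ)]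
    calc _ ≤ 2 * ρ / (2 * ((m : ℝ) + 1) * π) ^ 2 :=
          abs_one_div_sqrt_sub_one_div_le r t (by positivity) (by nlinarith [pi_pos])
      _ = ρ / (2 * π ^ 2) * (1 / ((m : ℝ) + 1) ^ 2) := by field_simp
  have hmajorant : HasSum (fun m : ℕ => ρ / (2 * π ^ 2) * (1 / ((m : ℝ) + 1) ^ 2)) (ρ / 12) := by
    rw [show ρ / 12 = ρ / (2 * π ^ 2) * (π ^ 2 / 6) by field_simp; ring]
    exact hasSum_one_div_succ_sq.mul_left _
  exact ⟨hmajorant.summable.of_nonneg_of_le (fun _ ↦ abs_nonneg _) hbound,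
    tsum_of_norm_bounded (E := ℝ) hmajorant hbound⟩

/-- the remainder series `S(x)` in the decomposition of the Green's
function on `ℝ² × 𝕋` converges absolutely and satisfies `|S(x)| ≤ C|x|` for
`x₃ ∈ [−π, π]`. -/
theorem stmt_1 : ∃ C > (0:ℝ), ∀ (x' : ℝ × ℝ) (x3 : ℝ), x3 ∈ Set.Icc (-π) π →
    Summable (fun m : ℕ =>
      |1 / Real.sqrt (vnorm x' ^ 2 + (x3 - 2 * ((m : ℝ) + 1) * π) ^ 2)
        - 1 / (2 * ((m : ℝ) + 1) * π)|) ∧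
    Summable (fun m : ℕ =>
      |1 / Real.sqrt (vnorm x' ^ 2 + (x3 + 2 * ((m : ℝ) + 1) * π) ^ 2)
        - 1 / (2 * ((m : ℝ) + 1) * π)|) ∧
    |(∑' m : ℕ, (1 / Real.sqrt (vnorm x' ^ 2 + (x3 - 2 * ((m : ℝ) + 1) * π) ^ 2)
        - 1 / (2 * ((m : ℝ) + 1) * π)))
      + (∑' m : ℕ, (1 / Real.sqrt (vnorm x' ^ 2 + (x3 + 2 * ((m : ℝ) + 1) * π) ^ 2)
        - 1 / (2 * ((m : ℝ) + 1) * π)))|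
      ≤ C * Real.sqrt (vnorm x' ^ 2 + x3 ^ 2) := by
  refine ⟨1 / 6, by norm_num, fun x' x3 hx3 ↦ ?_⟩
  have hx3 : |x3| ≤ π := abs_le.mpr hx3
  obtain ⟨hsum_add, htsum_add⟩ := summable_abs_and_abs_tsum_le (vnorm x') x3 hx3
  obtain ⟨hsum_sub, htsum_sub⟩ := summable_abs_and_abs_tsum_le (vnorm x') (-x3) (by rwa [abs_neg])
  have hreflect : ∀ b : ℝ, (-x3 + b) ^ 2 = (x3 - b) ^ 2 := fun b ↦ by ring
  simp only [hreflect, neg_sq] at hsum_sub htsum_sub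
  exact ⟨hsum_sub, hsum_add, (abs_add_le _ _).trans (by linarith)⟩
end

section
/- For all x, y ∈ ℝ² with (x, y) ≠ (0, 0), there holds the identity (1/(4π)) ∫_{−π}^{π} ∫_{−π}^{π} (|R_a x − R_b y|² + (a−b)²)^{−1/2} da db = (1/(4π)) ∫_{−2π}^{2π} (2π − |b|) (|x − R_b y|² + b²)^{−1/2} db; that is, K₁(x,y) equals the right-hand side. -/
open MeasureTheory Real intervalIntegral

/-- The kernel `K₁` appearing in the energy of the helical Euler equation. -/
noncomputable def K1 (x y : ℝ × ℝ) : ℝ :=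
  (1 / (4 * π)) * ∫ a in (-π)..π, ∫ b in (-π)..π,
    1 / Real.sqrt (vnorm (vrot a x - vrot b y) ^ 2 + (a - b) ^ 2)

/-!
Rotating both points by `-a` shows that the integrand of `K1 x y` depends on `(a, b)` only
through `c = b - a`, via `k1Profile x y c = (|x - R_c y|² + c²)^{-1/2}`. Integrating a function
of `b - a` over the square `[-L, L]²` amounts to integrating it against the length `2L - |c|` of
the diagonal slice `b - a = c`; for a continuous profile this follows from the Cauchy formula for
repeated integration. The profile is continuous unless `x = y`; then `|x - R_c x| ≤ |x| |c|`
makes it `≳ 1 / |c|` near `0`, so neither side is integrable and both equal `0` by the convention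
for non-integrable functions.
-/

open Filter Topology Asymptotics

theorem integral_primitive_eq_integral_sub_mul {f : ℝ → ℝ} (hf : Continuous f) (s : ℝ) :
    ∫ u in (0 : ℝ)..s, ∫ t in (0 : ℝ)..u, f t = ∫ t in (0 : ℝ)..s, (s - t) * f t := by
  have parts := integral_mul_deriv_eq_deriv_mul (a := 0) (b := s)
    (u := fun u => ∫ t in (0 : ℝ)..u, f t) (v := fun t => t - s) (v' := fun _ => 1)
    (fun u _ => hf.integral_hasStrictDerivAt 0 u |>.hasDerivAt)
    (fun t _ => (hasDerivAt_id t).sub_const s) (hf.intervalIntegrable _ _)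
    intervalIntegrable_const
  simp only [mul_one, sub_self, mul_zero, integral_same, zero_mul, zero_sub] at parts
  rw [parts, ← intervalIntegral.integral_neg]
  congr 1 with t
  ring

theorem integral_integral_comp_sub {f : ℝ → ℝ} (hf : Continuous f) {L : ℝ} (hL : 0 ≤ L) :
    ∫ a in (-L)..L, ∫ b in (-L)..L, f (b - a) =
      ∫ c in (-(2 * L))..(2 * L), (2 * L - |c|) * f c := by
  set F : ℝ → ℝ := fun u => ∫ t in (0 : ℝ)..u, f t
  have hF : Continuous F := continuous_primitive (fun _ _ => hf.intervalIntegrable _ _) 0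
  have inner (a : ℝ) : ∫ b in (-L)..L, f (b - a) = F (L - a) - F (-L - a) := by
    rw [integral_comp_sub_right, integral_interval_sub_left (hf.intervalIntegrable _ _)
      (hf.intervalIntegrable _ _)]
  have outer : ∫ a in (-L)..L, (F (L - a) - F (-L - a)) =
      (∫ u in (0 : ℝ)..(2 * L), F u) - ∫ u in (-(2 * L))..0, F u := by
    have shifted (d : ℝ) : IntervalIntegrable (fun a => F (d - a)) volume (-L) L :=
      (hF.comp (continuous_sub_left d)).intervalIntegrable _ _
    rw [integral_sub (shifted L) (shifted (-L)), integral_comp_sub_left F L,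
      integral_comp_sub_left F (-L)]
    ring_nf
  have left : ∫ u in (-(2 * L))..0, F u = -∫ c in (-(2 * L))..0, (2 * L - |c|) * f c := by
    rw [integral_symm, integral_primitive_eq_integral_sub_mul hf, integral_symm, neg_neg,
      ← intervalIntegral.integral_neg]
    refine integral_congr fun c hc => ?_
    rw [Set.uIcc_of_le (by linarith)] at hc
    simp only [abs_of_nonpos hc.2]
    ring
  have right :
      ∫ u in (0 : ℝ)..(2 * L), F u = ∫ c in (0 : ℝ)..(2 * L), (2 * L - |c|) * f c := by
    rw [integral_primitive_eq_integral_sub_mul hf]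
    refine integral_congr fun c hc => ?_
    rw [Set.uIcc_of_le (by linarith)] at hc
    simp only [abs_of_nonneg hc.1]
  have tent_integrable (u v : ℝ) : IntervalIntegrable (fun c => (2 * L - |c|) * f c) volume u v :=
    ((continuous_const.sub continuous_abs).mul hf).intervalIntegrable _ _
  simp only [inner]
  rw [outer, left, right, sub_neg_eq_add, add_comm,
    integral_add_adjacent_intervals (tent_integrable _ _) (tent_integrable _ _)]

theorem integral_integral_comp_sub_of_isBigO_inv {f : ℝ → ℝ}
    (hf : (fun c => c⁻¹) =O[𝓝[≠] 0] f) {L : ℝ} (hL : 0 < L) :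
    ∫ a in (-L)..L, ∫ b in (-L)..L, f (b - a) =
      ∫ c in (-(2 * L))..(2 * L), (2 * L - |c|) * f c := by
  have hf' : (fun c => (c - 0)⁻¹) =O[𝓝[≠] 0] f := by simpa only [sub_zero] using hf
  have inner : ∀ a ∈ Set.uIcc (-L) L, ∫ b in (-L)..L, f (b - a) = 0 := by
    intro a ha
    rw [Set.uIcc_of_le (by linarith)] at ha
    rw [integral_comp_sub_right, integral_undef (not_intervalIntegrable_of_sub_inv_isBigO_punctured
      hf' (by linarith) (Set.mem_uIcc.2 (.inl ⟨by linarith [ha.1], by linarith [ha.2]⟩)))]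
  have tent_near_zero : f =O[𝓝[≠] 0] fun c => (2 * L - |c|) * f c := by
    refine IsBigO.of_bound L⁻¹ (eventually_nhdsWithin_of_eventually_nhds ?_)
    filter_upwards [Metric.ball_mem_nhds 0 hL] with c hc
    rw [Metric.mem_ball, dist_zero_right, Real.norm_eq_abs] at hc
    rw [norm_mul, Real.norm_of_nonneg (r := 2 * L - |c|) (by linarith)]
    calc ‖f c‖ = L⁻¹ * (L * ‖f c‖) := by field_simp
      _ ≤ L⁻¹ * ((2 * L - |c|) * ‖f c‖) := by gcongr; linarith
  have outer : ∫ c in (-(2 * L))..(2 * L), (2 * L - |c|) * f c = 0 :=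
    integral_undef (not_intervalIntegrable_of_sub_inv_isBigO_punctured (hf'.trans tent_near_zero)
      (by linarith) (Set.mem_uIcc.2 (.inl ⟨by linarith, by linarith⟩)))
  rw [integral_congr inner, intervalIntegral.integral_zero, outer]

theorem vrot_vrot (a c : ℝ) (y : ℝ × ℝ) : vrot a (vrot c y) = vrot (a + c) y := by
  simp only [vrot, cos_add, sin_add, Prod.mk.injEq]
  constructor <;> ring

theorem vrot_sub (a : ℝ) (u v : ℝ × ℝ) : vrot a (u - v) = vrot a u - vrot a v := by
  simp only [vrot, Prod.fst_sub, Prod.snd_sub, Prod.mk_sub_mk, Prod.mk.injEq]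
  constructor <;> ring

theorem vrot_zero (y : ℝ × ℝ) : vrot 0 y = y := by
  simp [vrot]

theorem vnorm_vrot (a : ℝ) (z : ℝ × ℝ) : vnorm (vrot a z) = vnorm z := by
  unfold vnorm vrot
  congr 1
  linear_combination (z.1 ^ 2 + z.2 ^ 2) * sin_sq_add_cos_sq a

theorem vnorm_vrot_sub_vrot (a b : ℝ) (x y : ℝ × ℝ) :
    vnorm (vrot a x - vrot b y) = vnorm (x - vrot (b - a) y) := by
  have h : vrot a x - vrot b y = vrot a (x - vrot (b - a) y) := by
    rw [vrot_sub, vrot_vrot, add_sub_cancel]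
  rw [h, vnorm_vrot]

theorem vnorm_sq (z : ℝ × ℝ) : vnorm z ^ 2 = z.1 ^ 2 + z.2 ^ 2 :=
  sq_sqrt (by positivity)

theorem vnorm_eq_zero {z : ℝ × ℝ} : vnorm z = 0 ↔ z = 0 := by
  rw [vnorm, sqrt_eq_zero (by positivity), add_eq_zero_iff_of_nonneg (sq_nonneg _) (sq_nonneg _),
    sq_eq_zero_iff, sq_eq_zero_iff, Prod.ext_iff, Prod.fst_zero, Prod.snd_zero]

theorem vnorm_pos {z : ℝ × ℝ} (hz : z ≠ 0) : 0 < vnorm z :=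
  (sqrt_nonneg _).lt_of_ne' (vnorm_eq_zero.not.2 hz)

theorem vnorm_sub_vrot_self_sq_le (c : ℝ) (x : ℝ × ℝ) :
    vnorm (x - vrot c x) ^ 2 ≤ vnorm x ^ 2 * c ^ 2 := by
  have hcos : 1 - c ^ 2 / 2 ≤ cos c := one_sub_sq_div_two_le_cos
  simp only [vnorm_sq, vrot, Prod.fst_sub, Prod.snd_sub]
  nlinarith [sin_sq_add_cos_sq c, sq_nonneg x.1, sq_nonneg x.2]

noncomputable def k1Profile (x y : ℝ × ℝ) (c : ℝ) : ℝ :=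
  1 / √(vnorm (x - vrot c y) ^ 2 + c ^ 2)

theorem k1_integrand_eq_k1Profile (x y : ℝ × ℝ) (a b : ℝ) :
    1 / √(vnorm (vrot a x - vrot b y) ^ 2 + (a - b) ^ 2) = k1Profile x y (b - a) := by
  rw [k1Profile, vnorm_vrot_sub_vrot, ← neg_sub b a, neg_sq]

theorem continuous_k1Profile {x y : ℝ × ℝ} (hxy : x ≠ y) : Continuous (k1Profile x y) := by
  have hpos (c : ℝ) : 0 < vnorm (x - vrot c y) ^ 2 + c ^ 2 := by
    rcases eq_or_ne c 0 with rfl | hc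
    · rw [vrot_zero, zero_pow two_ne_zero, add_zero]
      exact pow_pos (vnorm_pos (sub_ne_zero.2 hxy)) 2
    · positivity
  refine continuous_const.div (continuous_sqrt.comp ?_) fun c => (sqrt_pos.2 (hpos c)).ne'
  simp only [vnorm_sq, vrot, Prod.fst_sub, Prod.snd_sub]
  fun_prop

theorem isBigO_inv_k1Profile_self (x : ℝ × ℝ) :
    (fun c => c⁻¹) =O[𝓝[≠] 0] k1Profile x x := by
  refine IsBigO.of_bound √(vnorm x ^ 2 + 1) (eventually_nhdsWithin_of_forall fun c hc => ?_)
  have hc : c ≠ 0 := hc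
  have hden : √(vnorm (x - vrot c x) ^ 2 + c ^ 2) ≤ √(vnorm x ^ 2 + 1) * |c| := by
    rw [← sqrt_sq_eq_abs, ← sqrt_mul (by positivity)]
    exact sqrt_le_sqrt (by nlinarith [vnorm_sub_vrot_self_sq_le c x])
  have hpos : 0 < √(vnorm (x - vrot c x) ^ 2 + c ^ 2) := by positivity
  rw [k1Profile, norm_inv, norm_div, norm_one, Real.norm_of_nonneg hpos.le, Real.norm_eq_abs,
    mul_one_div, inv_le_iff_one_le_mul₀ (abs_pos.2 hc), div_mul_eq_mul_div, one_le_div hpos]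
  exact hden

theorem stmt_3_general (x y : ℝ × ℝ) :
    K1 x y = (1 / (4 * π)) * ∫ b in (-(2 * π))..(2 * π),
      (2 * π - |b|) / Real.sqrt (vnorm (x - vrot b y) ^ 2 + b ^ 2) := by
  have tent_mul (b : ℝ) : (2 * π - |b|) / √(vnorm (x - vrot b y) ^ 2 + b ^ 2) =
      (2 * π - |b|) * k1Profile x y b := by
    rw [k1Profile, mul_one_div]
  simp only [K1, k1_integrand_eq_k1Profile, tent_mul]
  congr 1
  rcases eq_or_ne x y with rfl | hxy
  · exact integral_integral_comp_sub_of_isBigO_inv (isBigO_inv_k1Profile_self x) pi_pos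
  · exact integral_integral_comp_sub (continuous_k1Profile hxy) pi_pos.le

/-- the symmetrization identity for `K₁`. -/
theorem stmt_3 (x y : ℝ × ℝ) (hxy : ¬(x = 0 ∧ y = 0)) :
    K1 x y = (1 / (4 * π)) * ∫ b in (-(2 * π))..(2 * π),
      (2 * π - |b|) / Real.sqrt (vnorm (x - vrot b y) ^ 2 + b ^ 2) :=
  stmt_3_general x y
end

section
/- For every δ > 0 there exists C > 0 such that K₂(x,y) ≤ C ⟨y⟩ for all x, y ∈ ℝ² with |x − y| ≥ δ. -/
/-!
Identifying `ℝ²` with `ℂ`, `R_a y = e^{-ia} y`, so `|R_a y - y| ≤ |a| |y|`. Split the range of `a`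
at `|a| ⟨y⟩ = δ / 2`. For small `a` the point `R_a y` stays at distance `≥ δ / 2` from `x`, and the
integrand is at most `π² (2 / δ)³`. For large `a` the integrand is at most
`a² / |a|³ = 1 / |a| < 2 ⟨y⟩ / δ`. Both bounds are `O(⟨y⟩)`, and the interval has length `2π`.
-/

open MeasureTheory Real intervalIntegral

/-- The kernel `K₂(x,y) = ∫_{−π}^{π} a² (|x − R_a y|² + a²)^{−3/2} da`. -/
noncomputable def K2 (x y : ℝ × ℝ) : ℝ :=
  ∫ a in (-π)..π, a ^ 2 / Real.sqrt (vnorm (x - vrot a y) ^ 2 + a ^ 2) ^ 3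

open Complex in
lemma vnorm_eq_norm (x : ℝ × ℝ) : vnorm x = ‖equivRealProdAddHom.symm x‖ := by
  rw [vnorm, Complex.norm_def, Complex.normSq_apply]
  simp [sq]

open Complex in
lemma equivRealProdAddHom_symm_vrot (a : ℝ) (y : ℝ × ℝ) :
    equivRealProdAddHom.symm (vrot a y) = exp (I * ↑(-a)) * equivRealProdAddHom.symm y := by
  rw [mul_comm I, exp_mul_I]
  apply Complex.ext <;>
    simp only [vrot, equivRealProdAddHom_symm_apply_re, equivRealProdAddHom_symm_apply_im, mul_re,
      mul_im, add_re, add_im, neg_re, neg_im, I_re, I_im, ofReal_neg, Complex.cos_neg,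
      Complex.sin_neg, cos_ofReal_re, cos_ofReal_im, sin_ofReal_re, sin_ofReal_im] <;>
    ring

lemma vnorm_vrot_sub_le (a : ℝ) (y : ℝ × ℝ) : vnorm (vrot a y - y) ≤ |a| * vnorm y := by
  rw [vnorm_eq_norm, vnorm_eq_norm, map_sub, equivRealProdAddHom_symm_vrot, ← sub_one_mul,
    norm_mul, ← abs_neg a, ← Real.norm_eq_abs]
  gcongr
  exact Real.norm_exp_I_mul_ofReal_sub_one_le

lemma vnorm_sub_le_vnorm_sub_vrot_add (a : ℝ) (x y : ℝ × ℝ) :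
    vnorm (x - y) ≤ vnorm (x - vrot a y) + |a| * vnorm y := by
  grw [← vnorm_vrot_sub_le]
  simp only [vnorm_eq_norm, map_sub]
  exact norm_sub_le_norm_sub_add_norm_sub _ _ _

lemma vnorm_le_jap (y : ℝ × ℝ) : vnorm y ≤ jap y :=
  Real.sqrt_le_sqrt (by linarith)

lemma one_le_jap (y : ℝ × ℝ) : 1 ≤ jap y :=
  Real.one_le_sqrt.mpr (by nlinarith [sq_nonneg y.1, sq_nonneg y.2])

lemma sq_div_sqrt_pow_three_le_of_le {r s : ℝ} (hr : 0 < r) (hrs : r ≤ s) (a : ℝ) :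
    a ^ 2 / √(s ^ 2 + a ^ 2) ^ 3 ≤ a ^ 2 / r ^ 3 := by
  have : r ≤ √(s ^ 2 + a ^ 2) := Real.le_sqrt_of_sq_le (by nlinarith)
  gcongr

lemma sq_div_sqrt_pow_three_le_inv_abs (s a : ℝ) :
    a ^ 2 / √(s ^ 2 + a ^ 2) ^ 3 ≤ |a|⁻¹ := by
  rcases eq_or_ne a 0 with rfl | ha
  · simp
  have : |a| ≤ √(s ^ 2 + a ^ 2) := Real.abs_le_sqrt (by nlinarith)
  calc a ^ 2 / √(s ^ 2 + a ^ 2) ^ 3 ≤ |a| ^ 2 / |a| ^ 3 := by rw [sq_abs]; gcongr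
    _ = |a|⁻¹ := by field_simp

lemma K2_integrand_le {δ : ℝ} (hδ : 0 < δ) {x y : ℝ × ℝ} (hxy : δ ≤ vnorm (x - y)) {a : ℝ}
    (ha : |a| ≤ π) :
    a ^ 2 / √(vnorm (x - vrot a y) ^ 2 + a ^ 2) ^ 3 ≤ (8 * π ^ 2 / δ ^ 3 + 2 / δ) * jap y := by
  have hjap := one_le_jap y
  rcases le_or_gt (|a| * jap y) (δ / 2) with hsmall | hlarge
  · have hfar : δ / 2 ≤ vnorm (x - vrot a y) := by
      have := vnorm_sub_le_vnorm_sub_vrot_add a x y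
      have := mul_le_mul_of_nonneg_left (vnorm_le_jap y) (abs_nonneg a)
      linarith
    calc _ ≤ a ^ 2 / (δ / 2) ^ 3 := sq_div_sqrt_pow_three_le_of_le (by positivity) hfar a
      _ ≤ π ^ 2 / (δ / 2) ^ 3 := by rw [← sq_abs]; gcongr
      _ = 8 * π ^ 2 / δ ^ 3 := by ring
      _ ≤ 8 * π ^ 2 / δ ^ 3 + 2 / δ := le_add_of_nonneg_right (by positivity)
      _ ≤ _ := le_mul_of_one_le_right (by positivity) hjap
  · have ha : 0 < |a| := pos_of_mul_pos_left (by linarith) (by linarith)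
    calc _ ≤ |a|⁻¹ := sq_div_sqrt_pow_three_le_inv_abs _ a
      _ ≤ 2 / δ * jap y := by
        rw [inv_le_iff_one_le_mul₀ ha, div_mul_eq_mul_div, div_mul_eq_mul_div, one_le_div hδ]
        linarith
      _ ≤ _ := by gcongr; exact le_add_of_nonneg_left (by positivity)

/-- away from the diagonal, `K₂(x,y) ≤ C ⟨y⟩`. -/
theorem stmt_10 : ∀ δ > (0:ℝ), ∃ C > (0:ℝ), ∀ x y : ℝ × ℝ,
    δ ≤ vnorm (x - y) → K2 x y ≤ C * jap y := by
  intro δ hδ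
  refine ⟨2 * π * (8 * π ^ 2 / δ ^ 3 + 2 / δ), by positivity, fun x y hxy => ?_⟩
  have hbound : ∀ a ∈ Set.uIoc (-π) π, ‖a ^ 2 / √(vnorm (x - vrot a y) ^ 2 + a ^ 2) ^ 3‖ ≤
      (8 * π ^ 2 / δ ^ 3 + 2 / δ) * jap y := by
    intro a ha
    rw [Set.uIoc_of_le (by linarith [pi_pos])] at ha
    rw [norm_of_nonneg (by positivity)]
    exact K2_integrand_le hδ hxy (abs_le.mpr ⟨ha.1.le, ha.2⟩)
  calc K2 x y ≤ ‖K2 x y‖ := le_norm_self _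
    _ ≤ (8 * π ^ 2 / δ ^ 3 + 2 / δ) * jap y * |π - -π| := norm_integral_le_of_norm_le_const hbound
    _ = _ := by rw [abs_of_pos (by linarith [pi_pos])]; ring
end

section
/- For all x, y ∈ ℝ² with 0 < |x| ≤ |y|, the following hold: (i) |x − (|x|/|y|) y| ≤ |x − y|; (ii) |y| − |x| ≤ |x − y|; (iii) |x − y| ≤ |x − (|x|/|y|) y| + (|y| − |x|). In particular, |x − y| ≤ |x − (|x|/|y|) y| + (|y| − |x|) ≤ 2 |x − y|, i.e. the two quantities are comparable with universal constants. -/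
open MeasureTheory Real intervalIntegral

/-!
Write `t = ‖x‖ / ‖y‖ ∈ [0, 1]`, so that `t • y` lies on the sphere of radius `‖x‖`. Expanding the
squares and using Cauchy–Schwarz once, `‖x - t • y‖² + (‖y‖ - ‖x‖)² ≤ ‖x - y‖²`, which gives (i) and
(together with the reverse triangle inequality (ii)) the upper bound `2 ‖x - y‖`. The lower bound (iii)
is the triangle inequality through `t • y`, since `‖t • y - y‖ = ‖y‖ - ‖x‖`.
-/

section RadialProjection

variable {E : Type*} [SeminormedAddCommGroup E]

theorem norm_div_norm_mul_norm_of_norm_le {x y : E} (h : ‖x‖ ≤ ‖y‖) :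
    ‖x‖ / ‖y‖ * ‖y‖ = ‖x‖ := by
  rcases (norm_nonneg y).eq_or_lt with hy | hy
  · rw [← hy] at h ⊢
    linarith [norm_nonneg x]
  · exact div_mul_cancel₀ _ hy.ne'

theorem norm_div_norm_smul_sub_self_of_norm_le [NormedSpace ℝ E] {x y : E} (h : ‖x‖ ≤ ‖y‖) :
    ‖(‖x‖ / ‖y‖) • y - y‖ = ‖y‖ - ‖x‖ := by
  have ht1 : 0 ≤ 1 - ‖x‖ / ‖y‖ := sub_nonneg.2 (div_le_one_of_le₀ h (norm_nonneg y))
  have hsmul : y - (‖x‖ / ‖y‖) • y = (1 - ‖x‖ / ‖y‖) • y := by rw [sub_smul, one_smul]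
  rw [← norm_neg, neg_sub, hsmul, norm_smul, Real.norm_eq_abs, abs_of_nonneg ht1,
    sub_mul, one_mul, norm_div_norm_mul_norm_of_norm_le h]

theorem norm_sub_le_norm_sub_div_norm_smul_add [NormedSpace ℝ E] {x y : E} (h : ‖x‖ ≤ ‖y‖) :
    ‖x - y‖ ≤ ‖x - (‖x‖ / ‖y‖) • y‖ + (‖y‖ - ‖x‖) :=
  norm_div_norm_smul_sub_self_of_norm_le h ▸ norm_sub_le_norm_sub_add_norm_sub _ _ _

variable [InnerProductSpace ℝ E]

theorem norm_sub_div_norm_smul_sq_add_sq_le {x y : E} (h : ‖x‖ ≤ ‖y‖) :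
    ‖x - (‖x‖ / ‖y‖) • y‖ ^ 2 + (‖y‖ - ‖x‖) ^ 2 ≤ ‖x - y‖ ^ 2 := by
  set t := ‖x‖ / ‖y‖
  have ht : t * ‖y‖ = ‖x‖ := norm_div_norm_mul_norm_of_norm_le h
  have ht0 : 0 ≤ t := by positivity
  have ht1 : 0 ≤ 1 - t := sub_nonneg.2 (div_le_one_of_le₀ h (norm_nonneg y))
  have hcs : (1 - t) * inner ℝ x y ≤ (1 - t) * (‖x‖ * ‖y‖) :=
    mul_le_mul_of_nonneg_left (real_inner_le_norm x y) ht1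
  rw [norm_sub_sq_real, norm_sub_sq_real, real_inner_smul_right, norm_smul, Real.norm_eq_abs,
    abs_of_nonneg ht0]
  nlinarith

theorem norm_sub_div_norm_smul_le {x y : E} (h : ‖x‖ ≤ ‖y‖) :
    ‖x - (‖x‖ / ‖y‖) • y‖ ≤ ‖x - y‖ :=
  le_of_sq_le_sq (by nlinarith [norm_sub_div_norm_smul_sq_add_sq_le h]) (norm_nonneg _)

end RadialProjection

theorem vnorm_eq_norm_toLp (x : ℝ × ℝ) : vnorm x = ‖WithLp.toLp 2 x‖ := by
  simp [vnorm, WithLp.prod_norm_eq_of_L2]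

theorem stmt_11_general (x y : ℝ × ℝ) (hxy : vnorm x ≤ vnorm y) :
    vnorm (x - (vnorm x / vnorm y) • y) ≤ vnorm (x - y) ∧
    vnorm y - vnorm x ≤ vnorm (x - y) ∧
    vnorm (x - y) ≤ vnorm (x - (vnorm x / vnorm y) • y) + (vnorm y - vnorm x) ∧
    vnorm (x - (vnorm x / vnorm y) • y) + (vnorm y - vnorm x) ≤ 2 * vnorm (x - y) := by
  simp only [vnorm_eq_norm_toLp, WithLp.toLp_sub, WithLp.toLp_smul] at hxy ⊢
  set X := WithLp.toLp 2 x
  set Y := WithLp.toLp 2 y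
  have hi := norm_sub_div_norm_smul_le hxy
  have hii : ‖Y‖ - ‖X‖ ≤ ‖X - Y‖ := norm_sub_rev X Y ▸ norm_sub_norm_le Y X
  exact ⟨hi, hii, norm_sub_le_norm_sub_div_norm_smul_add hxy, by linarith⟩

/-- for `0 < |x| ≤ |y|`, the quantity `|x − (|x|/|y|)y| + (|y| − |x|)`
is comparable to `|x − y|` with universal constants. -/
theorem stmt_11 (x y : ℝ × ℝ) (hx : 0 < vnorm x) (hxy : vnorm x ≤ vnorm y) :
    vnorm (x - (vnorm x / vnorm y) • y) ≤ vnorm (x - y) ∧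
    vnorm y - vnorm x ≤ vnorm (x - y) ∧
    vnorm (x - y) ≤ vnorm (x - (vnorm x / vnorm y) • y) + (vnorm y - vnorm x) ∧
    vnorm (x - (vnorm x / vnorm y) • y) + (vnorm y - vnorm x) ≤ 2 * vnorm (x - y) :=
  stmt_11_general x y hxy
end

section
/- For every K > 0 there exists C > 0 such that the following holds: let ε ∈ (0, 1/2), let w : ℝ² → ℝ be measurable with 0 ≤ w(x) ≤ K/ε² for almost every x and ∫_{ℝ²} w(x) dx ≤ 1, and let f : ℝ² → [0, ∞) be integrable. Then ∫_{ℝ²} ∫_{ℝ²} log(1/|x−y|) 1_{|x−y|≤1} f(x) w(y) dx dy ≤ C log(1/ε) ∫_{ℝ²} f(x) dx. -/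
open MeasureTheory Real intervalIntegral

/-!
Split the kernel at radius `ε`: `log (1/|z|) ≤ log (1/ε) + log⁺ (ε/|z|)`. Against `w` the
first term contributes at most `log (1/ε) ∫ w ≤ log (1/ε)`. The second has integral at most
`2πε²`, since in polar coordinates the Jacobian gives `r log (ε/r) ≤ ε` on `r ≤ ε`; against
`w ≤ K/ε²` it contributes at most `2πK ≤ (2πK / log 2) log (1/ε)`. So the inner integral is
`O(log (1/ε))` uniformly in `x`, and integrating against `f ≥ 0` gives the claim.
-/

open Set

lemma vnorm_nonneg (z : ℝ × ℝ) : 0 ≤ vnorm z := Real.sqrt_nonneg _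

lemma continuous_vnorm : Continuous vnorm :=
  ((continuous_fst.pow 2).add (continuous_snd.pow 2)).sqrt

lemma vnorm_polarCoord_symm {p : ℝ × ℝ} (hp : 0 ≤ p.1) : vnorm (polarCoord.symm p) = p.1 := by
  have : (p.1 * cos p.2) ^ 2 + (p.1 * sin p.2) ^ 2 = p.1 ^ 2 := by
    linear_combination p.1 ^ 2 * sin_sq_add_cos_sq p.2
  rw [polarCoord_symm_apply, vnorm, this, Real.sqrt_sq hp]

/-- The logarithm truncated at radius `r`; at `z = 0` it has the junk value `log (r / 0) = 0`. -/
noncomputable def logKernel (r : ℝ) (z : ℝ × ℝ) : ℝ :=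
  if vnorm z ≤ r then log (r / vnorm z) else 0

lemma measurable_logKernel (r : ℝ) : Measurable (logKernel r) :=
  Measurable.ite (measurableSet_le continuous_vnorm.measurable measurable_const)
    (measurable_log.comp (measurable_const.div continuous_vnorm.measurable)) measurable_const

lemma logKernel_nonneg (r : ℝ) (z : ℝ × ℝ) : 0 ≤ logKernel r z := by
  unfold logKernel
  split_ifs with h
  · rcases (vnorm_nonneg z).eq_or_lt with h0 | h0
    · rw [← h0, div_zero, log_zero]
    · exact log_nonneg ((one_le_div h0).2 h)
  · exact le_rfl

lemma logKernel_le_log_div_add_logKernel {ε R : ℝ} (hε : 0 < ε) (hεR : ε ≤ R) (z : ℝ × ℝ) :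
    logKernel R z ≤ log (R / ε) + logKernel ε z := by
  have hR0 : 0 < R := hε.trans_le hεR
  have hlog : 0 ≤ log (R / ε) := log_nonneg ((one_le_div hε).2 hεR)
  unfold logKernel
  by_cases hR : vnorm z ≤ R
  swap
  · rw [if_neg hR]
    exact add_nonneg hlog (logKernel_nonneg ε z)
  rw [if_pos hR]
  rcases (vnorm_nonneg z).eq_or_lt with h0 | h0
  · rw [← h0, div_zero, log_zero, if_pos hε.le, div_zero, log_zero, add_zero]
    exact hlog
  by_cases hz : vnorm z ≤ ε
  · rw [if_pos hz, ← log_mul (by positivity) (by positivity)]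
    field_simp
    exact le_rfl
  · rw [if_neg hz, add_zero]
    exact log_le_log (by positivity)
      (div_le_div_of_nonneg_left hR0.le hε (not_le.1 hz).le)

lemma mul_logKernel_polarCoord_symm_le {ε : ℝ} (hε : 0 < ε) {p : ℝ × ℝ}
    (hp : p ∈ polarCoord.target) :
    p.1 * logKernel ε (polarCoord.symm p) ≤
      (Ioc 0 ε ×ˢ Ioo (-π) π).indicator (fun _ => ε) p := by
  have hp1 : 0 < p.1 := hp.1
  rw [logKernel, vnorm_polarCoord_symm hp1.le]
  by_cases h : p.1 ≤ ε
  · have hmem : p ∈ Ioc 0 ε ×ˢ Ioo (-π) π := ⟨⟨hp1, h⟩, hp.2⟩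
    rw [if_pos h, indicator_of_mem hmem]
    calc p.1 * log (ε / p.1) ≤ p.1 * (ε / p.1) :=
          mul_le_mul_of_nonneg_left (log_le_self (by positivity)) hp1.le
      _ = ε := mul_div_cancel₀ _ hp1.ne'
  · rw [if_neg h, indicator_of_notMem (fun hm => h hm.1.2), mul_zero]

lemma lintegral_logKernel_le {ε : ℝ} (hε : 0 < ε) :
    ∫⁻ z, ENNReal.ofReal (logKernel ε z) ≤ ENNReal.ofReal (2 * π * ε ^ 2) := by
  set s : Set (ℝ × ℝ) := Ioc 0 ε ×ˢ Ioo (-π) π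
  have hs : MeasurableSet s := measurableSet_Ioc.prod measurableSet_Ioo
  rw [← lintegral_comp_polarCoord_symm]
  calc _ ≤ ∫⁻ p in polarCoord.target, s.indicator (fun _ => ENNReal.ofReal ε) p := by
        refine setLIntegral_mono' polarCoord.open_target.measurableSet fun p hp => ?_
        rw [smul_eq_mul, ← ENNReal.ofReal_mul hp.1.le]
        exact (ENNReal.ofReal_le_ofReal (mul_logKernel_polarCoord_symm_le hε hp)).trans_eq
          (congrFun (indicator_comp_of_zero ENNReal.ofReal_zero) p).symm
    _ ≤ ∫⁻ p, s.indicator (fun _ => ENNReal.ofReal ε) p := setLIntegral_le_lintegral _ _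
    _ = ENNReal.ofReal (2 * π * ε ^ 2) := by
        rw [lintegral_indicator_const hs, Measure.volume_eq_prod, Measure.prod_prod,
          Real.volume_Ioc, Real.volume_Ioo, ← ENNReal.ofReal_mul (by positivity),
          ← ENNReal.ofReal_mul hε.le]
        ring_nf

lemma integrable_logKernel {ε : ℝ} (hε : 0 < ε) : Integrable (logKernel ε) :=
  (lintegral_ofReal_ne_top_iff_integrable (measurable_logKernel ε).aestronglyMeasurable
    (ae_of_all _ (logKernel_nonneg ε))).1 (ne_top_of_le_ne_top ENNReal.ofReal_ne_top
    (lintegral_logKernel_le hε))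

lemma integral_logKernel_le {ε : ℝ} (hε : 0 < ε) : ∫ z, logKernel ε z ≤ 2 * π * ε ^ 2 := by
  rw [integral_eq_lintegral_of_nonneg_ae (ae_of_all _ (logKernel_nonneg ε))
    (measurable_logKernel ε).aestronglyMeasurable]
  exact ENNReal.toReal_le_of_le_ofReal (by positivity) (lintegral_logKernel_le hε)

lemma integral_logKernel_sub_mul_le {ε R M : ℝ} (hε : 0 < ε) (hεR : ε ≤ R) (hM : 0 ≤ M)
    {w : ℝ × ℝ → ℝ} (hw : ∀ᵐ y, 0 ≤ w y ∧ w y ≤ M) (hwi : Integrable w) (x : ℝ × ℝ) :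
    ∫ y, logKernel R (x - y) * w y ≤ log (R / ε) * (∫ y, w y) + M * (2 * π * ε ^ 2) := by
  have hshift : Integrable fun y => logKernel ε (x - y) :=
    (integrable_logKernel hε).comp_sub_left x
  have hpointwise : ∀ᵐ y, logKernel R (x - y) * w y ≤
      log (R / ε) * w y + M * logKernel ε (x - y) := by
    filter_upwards [hw] with y ⟨hw0, hwM⟩
    calc logKernel R (x - y) * w y ≤ (log (R / ε) + logKernel ε (x - y)) * w y :=
          mul_le_mul_of_nonneg_right (logKernel_le_log_div_add_logKernel hε hεR _) hw0
      _ ≤ log (R / ε) * w y + M * logKernel ε (x - y) := by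
          nlinarith [mul_le_mul_of_nonneg_left hwM (logKernel_nonneg ε (x - y))]
  calc ∫ y, logKernel R (x - y) * w y
      ≤ ∫ y, (log (R / ε) * w y + M * logKernel ε (x - y)) :=
        integral_mono_of_nonneg (hw.mono fun y hy => mul_nonneg (logKernel_nonneg R _) hy.1)
          ((hwi.const_mul _).add (hshift.const_mul _)) hpointwise
    _ = log (R / ε) * (∫ y, w y) + M * (∫ z, logKernel ε z) := by
        rw [integral_add (hwi.const_mul _) (hshift.const_mul _),
          MeasureTheory.integral_const_mul, MeasureTheory.integral_const_mul,
          integral_sub_left_eq_self]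
    _ ≤ log (R / ε) * (∫ y, w y) + M * (2 * π * ε ^ 2) :=
        add_le_add_right (mul_le_mul_of_nonneg_left (integral_logKernel_le hε) hM) _

/-- the truncated logarithmic interaction of an integrable
nonnegative `f` with a vorticity `w` of unit mass bounded by `K/ε²` is at most
`C log(1/ε) ∫ f`. -/
theorem stmt_12 : ∀ K > (0:ℝ), ∃ C > (0:ℝ), ∀ ε : ℝ, ε ∈ Set.Ioo (0:ℝ) (1/2) →
    ∀ w : ℝ × ℝ → ℝ, Measurable w →
    (∀ᵐ x : ℝ × ℝ, 0 ≤ w x ∧ w x ≤ K / ε ^ 2) →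
    Integrable w → (∫ x : ℝ × ℝ, w x) ≤ 1 →
    ∀ f : ℝ × ℝ → ℝ, Integrable f → (∀ x, 0 ≤ f x) →
    (∫ x : ℝ × ℝ, ∫ y : ℝ × ℝ,
        (if vnorm (x - y) ≤ 1 then Real.log (1 / vnorm (x - y)) else 0) * f x * w y)
      ≤ C * Real.log (1 / ε) * ∫ x : ℝ × ℝ, f x := by
  intro K hK
  set C := 1 + 2 * π * K / log 2
  refine ⟨C, by positivity, ?_⟩
  rintro ε ⟨hε0, hε⟩ w - hw hwi hwm f hfi hf
  have hlog : log 2 ≤ log (1 / ε) := log_le_log two_pos (by rw [le_div_iff₀ hε0]; linarith)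
  have hinner (x : ℝ × ℝ) : ∫ y, logKernel 1 (x - y) * w y ≤ C * log (1 / ε) := by
    have hmass : K / ε ^ 2 * (2 * π * ε ^ 2) ≤ 2 * π * K / log 2 * log (1 / ε) :=
      calc K / ε ^ 2 * (2 * π * ε ^ 2) = 2 * π * K / log 2 * log 2 := by field_simp
        _ ≤ 2 * π * K / log 2 * log (1 / ε) := by gcongr
    calc ∫ y, logKernel 1 (x - y) * w y
        ≤ log (1 / ε) * (∫ y, w y) + K / ε ^ 2 * (2 * π * ε ^ 2) :=
          integral_logKernel_sub_mul_le hε0 (by linarith) (by positivity) hw hwi x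
      _ ≤ log (1 / ε) * 1 + 2 * π * K / log 2 * log (1 / ε) :=
          add_le_add (mul_le_mul_of_nonneg_left hwm ((log_nonneg one_le_two).trans hlog)) hmass
      _ = C * log (1 / ε) := by ring
  calc (∫ x, ∫ y, logKernel 1 (x - y) * f x * w y)
      = ∫ x, f x * ∫ y, logKernel 1 (x - y) * w y := by
        simp_rw [← MeasureTheory.integral_const_mul, mul_left_comm (f _), mul_assoc]
    _ ≤ ∫ x, C * log (1 / ε) * f x :=
        integral_mono_of_nonneg (ae_of_all _ fun x => mul_nonneg (hf x) (integral_nonneg_of_ae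
          (hw.mono fun y hy => mul_nonneg (logKernel_nonneg 1 _) hy.1)))
          (hfi.const_mul _) (ae_of_all _ fun x => by nlinarith [hinner x, hf x])
    _ = C * log (1 / ε) * ∫ x, f x := MeasureTheory.integral_const_mul _ _
end
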